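/- arXiv:2503.01779 — 3 statements merged into one kernel-verified Lean document; each statement's English description precedes it below -/
import Mathlib

section
/- In the graded-commutative ring generated over ℤ by degree-1 elements a_1*, b_1*, ..., a_g*, b_g* and a central degree-2 element c*, subject to (a_i*)^2 = (b_i*)^2 = 0, anticommutativity of distinct degree-1 generators, and the Macdonald relation (c*)^{k-1}(a_k* b_k* - c*) = 0 for all k ≤ n: for every n ≤ g, the product a_1* b_1* a_2* b_2* ⋯ a_n* b_n* equals (c*)^n. -/
theorem List.prod_map_range_eq_pow {M : Type*} [Monoid M] (n : ℕ) (x : ℕ → M) (c : M)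
    (h : ∀ k, k < n → c ^ k * x k = c ^ (k + 1)) :
    ((List.range n).map x).prod = c ^ n := by
  induction n with
  | zero => simp
  | succ m ih =>
    rw [List.range_succ, List.map_append, List.prod_append,
      ih fun k hk => h k (Nat.lt_succ_of_lt hk)]
    simpa using h m m.lt_succ_self

theorem stmt_0_general {R : Type*} [Ring R] (n : ℕ)
    (a b : ℕ → R) (c : R)
    (hMac : ∀ k, k < n → c ^ k * (a k * b k - c) = 0) :
    ((List.range n).map (fun i => a i * b i)).prod = c ^ n := by
  refine List.prod_map_range_eq_pow n _ c fun k hk => ?_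
  rw [pow_succ, ← sub_eq_zero, ← mul_sub]
  exact hMac k hk

/-- In the (graded-commutative) ring generated over ℤ by degree-1
elements `a i`, `b i` (i < g) and a central degree-2 element `c`, subject to
`(a i)^2 = (b i)^2 = 0`, anticommutativity of distinct degree-1 generators, and the
Macdonald relations `c^k * (a k * b k - c) = 0` for `k < n` (0-indexed version of
`(c*)^{k-1}(a_k* b_k* - c*) = 0` for `k ≤ n`): for every `n ≤ g`, the ordered product
`a 0 * b 0 * a 1 * b 1 * ⋯ * a (n-1) * b (n-1)` equals `c ^ n`. -/
theorem stmt_0 {R : Type*} [Ring R] (g n : ℕ) (hng : n ≤ g)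
    (a b : ℕ → R) (c : R)
    (hc : ∀ r : R, c * r = r * c)
    (ha2 : ∀ i, i < g → a i ^ 2 = 0)
    (hb2 : ∀ i, i < g → b i ^ 2 = 0)
    (haa : ∀ i j, i < g → j < g → i ≠ j → a i * a j = -(a j * a i))
    (hbb : ∀ i j, i < g → j < g → i ≠ j → b i * b j = -(b j * b i))
    (hab : ∀ i j, i < g → j < g → a i * b j = -(b j * a i))
    (hMac : ∀ k, k < n → c ^ k * (a k * b k - c) = 0) :
    ((List.range n).map (fun i => a i * b i)).prod = c ^ n :=
  stmt_0_general n a b c hMac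
end

section
/- Let R be a commutative ring of characteristic 2 containing elements x_1, ..., x_k and c such that for every nonempty subset S of {1,...,k}, c^{n-|S|} · ∏_{s∈S}(x_s - c) = 0 (where n ≥ k). Then c^{n-k} · ∏_{s=1}^{k} x_s = c^n. -/
/-- Let `R` be a commutative ring of characteristic 2 containing elements
`x 1, ..., x k` and `c` such that for every nonempty subset `S` of `{1,...,k}`,
`c^(n - |S|) * ∏_{s ∈ S} (x s - c) = 0` (where `n ≥ k`).
Then `c^(n-k) * ∏_{s=1}^k x s = c^n`. -/
theorem stmt_1 {R : Type*} [CommRing R] [CharP R 2] (k n : ℕ) (hkn : k ≤ n)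
    (x : Fin k → R) (c : R)
    (hrel : ∀ S : Finset (Fin k), S.Nonempty →
      c ^ (n - S.card) * ∏ s ∈ S, (x s - c) = 0) :
    c ^ (n - k) * ∏ s : Fin k, x s = c ^ n := by
  have hexp : (∏ s : Fin k, x s) = ∏ s : Fin k, ((x s - c) + c) :=
    Finset.prod_congr rfl fun s _ => by ring
  rw [hexp, Finset.prod_add, Finset.mul_sum]
  rw [Finset.sum_eq_single (∅ : Finset (Fin k))]
  · have : ((Finset.univ : Finset (Fin k)) \ ∅).card = k := by simp
    simp only [Finset.prod_empty, one_mul, Finset.prod_const, this]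
    rw [← pow_add, Nat.sub_add_cancel hkn]
  · intro t ht hne
    have htne : t.Nonempty := Finset.nonempty_iff_ne_empty.mpr hne
    have hcard : t.card ≤ k := by
      simpa using Finset.card_le_card (Finset.subset_univ t)
    have hdiff : ((Finset.univ : Finset (Fin k)) \ t).card = k - t.card := by
      simp [Finset.card_sdiff_of_subset (Finset.subset_univ t)]
    rw [Finset.prod_const, hdiff, ← mul_assoc, mul_comm _ (∏ i ∈ t, (x i - c)),
      mul_assoc, ← pow_add]
    have : n - k + (k - t.card) = n - t.card := by omega
    rw [this, mul_comm, hrel t htne]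
  · intro h; simp at h
end

section
/- Let ξ = L ⊕ (n−1)ε be a rank-n complex vector bundle over the 2-torus T², where L is a line bundle and ε is trivial. For any n-fold covering f: T² → T², the pullback f*ξ has first Chern class c₁(f*ξ) = n·c₁(L) = c₁(nL), and since complex vector bundles over T² are classified by rank and first Chern class, f*ξ ≅ L' ⊕ ⋯ ⊕ L' is isomorphic to a direct sum of n copies of a single line bundle L' with c₁(L') = c₁(L); hence the projectivization of f*ξ is a trivial ℂP^{n−1}-bundle over T². -/
/-- `copies s v k` is the Whitney sum of `k+1` copies of the bundle `v`. -/
def copies {VB : Type*} (s : VB → VB → VB) (v : VB) : ℕ → VB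
  | 0 => v
  | k + 1 => s v (copies s v k)

/-- Abstract isomorphism classes `VB` of complex vector bundles over
`T²`, with Whitney sum `s`, `rank`, first Chern class `c1` (additive on sums), line
bundles `L d` of Chern class `d` (so `L 0 = ε` is trivial), and the classification:
bundles over `T²` are determined by rank and `c1` (`hclass`). Let
`ξ = L d ⊕ (n−1)ε` be a rank-`n` bundle (`η` is the trivial rank-`(n−1)` summand) and
`F = f*` the pullback along an `n`-fold covering `f : T² → T²`, which preserves rank
and multiplies `c1` by `n`. Then `c1(Fξ) = n·c1(L d) = c1(nL)`, and `Fξ` is the direct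
sum of `n` copies of the single line bundle `L d`; hence (since the projectivization
of a sum of copies of one line bundle is trivial, `hPT`), the projectivization of
`Fξ` is a trivial `ℂP^{n−1}`-bundle. -/
theorem stmt_19 {VB : Type*} (s : VB → VB → VB) (rank : VB → ℕ) (c1 : VB → ℤ)
    (hrank : ∀ v w, rank (s v w) = rank v + rank w)
    (hc1 : ∀ v w, c1 (s v w) = c1 v + c1 w)
    (L : ℤ → VB) (hLrank : ∀ d, rank (L d) = 1) (hLc1 : ∀ d, c1 (L d) = d)
    (hclass : ∀ v w, rank v = rank w → c1 v = c1 w → v = w)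
    (PT : VB → Prop) (hPT : ∀ (d : ℤ) (k : ℕ), PT (copies s (L d) k))
    (n : ℕ) (hn : 1 ≤ n)
    (F : VB → VB) (hFrank : ∀ v, rank (F v) = rank v)
    (hFc1 : ∀ v, c1 (F v) = n * c1 v)
    (d : ℤ) (η ξ : VB) (hη : rank η = n - 1) (hη0 : c1 η = 0)
    (hξ : ξ = s (L d) η) :
    c1 (F ξ) = n * d ∧ F ξ = copies s (L d) (n - 1) ∧ PT (F ξ) := by
  have crank : ∀ k, rank (copies s (L d) k) = k + 1 := by
    intro k
    induction k with
    | zero => simp [copies, hLrank]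
    | succ k ih => simp [copies, hrank, hLrank, ih]; ring
  have cc1 : ∀ k, c1 (copies s (L d) k) = (k + 1) * d := by
    intro k
    induction k with
    | zero => simp [copies, hLc1]
    | succ k ih => simp [copies, hc1, hLc1, ih]; ring
  have h1 : c1 (F ξ) = n * d := by
    rw [hFc1, hξ, hc1, hLc1, hη0]; ring
  have h2 : F ξ = copies s (L d) (n - 1) := by
    apply hclass
    · rw [hFrank, hξ, hrank, hLrank, hη, crank]; omega
    · rw [h1, cc1]
      have : (↑(n - 1) : ℤ) + 1 = n := by omega
      rw [this]
  exact ⟨h1, h2, h2 ▸ hPT d (n - 1)⟩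
end
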